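/- arXiv:2301.03649 — 8 statements merged into one kernel-verified Lean document; each statement's English description precedes it below -/
import Mathlib

section
/- Given one exact row and one exact column crossing at B₂ — R-linear maps f : A → B₂, g : B₂ → C with Im(f) = Ker(g), and β₁ : B₁ → B₂, β₂ : B₂ → B₃ with Im(β₁) = Ker(β₂) — and given elements b₂ ∈ B₂, c ∈ C, b₃ ∈ B₃ with c = g(b₂) and b₃ = β₂(b₂) (i.e., (c, b₃) lies in the relation g∘β₂⁻¹), then b₃ lies in the image of β₂∘f if and only if c lies in the image of g∘β₁. -/
/-- Lemma 2 (1) of the paper: one exact row `A → B₂ → C` and one exact column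
`B₁ → B₂ → B₃` crossing at `B₂`.  For a pair `(c, b₃)` in the relation
`g ∘ β₂⁻¹` (witnessed by `b₂`), `b₃ ∈ Im (β₂ ∘ f)` iff `c ∈ Im (g ∘ β₁)`. -/
theorem cross_lemma_part1 {R : Type*} [Ring R]
    {A B₁ B₂ B₃ C : Type*}
    [AddCommGroup A] [Module R A] [AddCommGroup B₁] [Module R B₁]
    [AddCommGroup B₂] [Module R B₂] [AddCommGroup B₃] [Module R B₃]
    [AddCommGroup C] [Module R C]
    (f : A →ₗ[R] B₂) (g : B₂ →ₗ[R] C)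
    (β₁ : B₁ →ₗ[R] B₂) (β₂ : B₂ →ₗ[R] B₃)
    (hrow : LinearMap.range f = LinearMap.ker g)
    (hcol : LinearMap.range β₁ = LinearMap.ker β₂)
    (b₂ : B₂) (c : C) (b₃ : B₃)
    (hc : c = g b₂) (hb : b₃ = β₂ b₂) :
    b₃ ∈ LinearMap.range (β₂ ∘ₗ f) ↔ c ∈ LinearMap.range (g ∘ₗ β₁) := by
  constructor
  · rintro ⟨a, ha⟩
    simp only [LinearMap.comp_apply] at ha
    have h1 : β₂ (b₂ - f a) = 0 := by rw [map_sub, ha, ← hb, sub_self]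
    have h2 : b₂ - f a ∈ LinearMap.ker β₂ := h1
    rw [← hcol] at h2
    obtain ⟨b₁, hb₁⟩ := h2
    refine ⟨b₁, ?_⟩
    have hfa : g (f a) = 0 := by
      have : f a ∈ LinearMap.ker g := hrow ▸ LinearMap.mem_range_self f a
      exact this
    simp only [LinearMap.comp_apply, hb₁, map_sub, hfa, sub_zero, hc]
  · rintro ⟨b₁, hb₁⟩
    simp only [LinearMap.comp_apply] at hb₁
    have h1 : g (b₂ - β₁ b₁) = 0 := by rw [map_sub, hb₁, ← hc, sub_self]
    have h2 : b₂ - β₁ b₁ ∈ LinearMap.ker g := h1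
    rw [← hrow] at h2
    obtain ⟨a, ha⟩ := h2
    refine ⟨a, ?_⟩
    have hβ : β₂ (β₁ b₁) = 0 := by
      have : β₁ b₁ ∈ LinearMap.ker β₂ := hcol ▸ LinearMap.mem_range_self β₁ b₁
      exact this
    simp only [LinearMap.comp_apply, ha, map_sub, hβ, sub_zero, hb]
end

section
/- Given a commutative diagram of R-modules with rows (f₁, g₁) : A₁ → B₁ → C₁, (f₂, g₂) : A₂ → B₂ → C₂, f₃ : A₃ → B₃ and columns (α₁, α₂) : A₁ → A₂ → A₃, (β₁, β₂) : B₁ → B₂ → B₃, γ₁ : C₁ → C₂, where all four squares commute, the rows are exact at B₁ and B₂ (Im f₁ = Ker g₁, Im f₂ = Ker g₂) and the columns are exact at A₂ and B₂ (Im α₁ = Ker α₂, Im β₁ = Ker β₂), then the homology at the middle position of the complex 0 → Ker α₁ → Ker β₁ → Ker γ₁ (with maps induced by f₁ and g₁) is isomorphic as an R-module to the homology at the middle position of the complex 0 → Ker f₁ → Ker f₂ → Ker f₃ (with maps induced by α₁ and α₂); that is, Ker(Ker β₁ → Ker γ₁)/Im(Ker α₁ → Ker β₁) ≅ Ker(Ker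 f₂ → Ker f₃)/Im(Ker f₁ → Ker f₂). -/
/-- Given a commutative diagram with rows `A₁ → B₁ → C₁`, `A₂ → B₂ → C₂`,
`A₃ → B₃` and columns `A₁ → A₂ → A₃`, `B₁ → B₂ → B₃`, `C₁ → C₂`, with exact
rows at `B₁`, `B₂` and exact columns at `A₂`, `B₂`, the middle homology of
`0 → Ker α₁ → Ker β₁ → Ker γ₁` is isomorphic to the middle homology of
`0 → Ker f₁ → Ker f₂ → Ker f₃`:
`Ker(Ker β₁ → Ker γ₁)/Im(Ker α₁ → Ker β₁) ≅ Ker(Ker f₂ → Ker f₃)/Im(Ker f₁ → Ker f₂)`. -/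
theorem corollary_second_position {R : Type*} [Ring R]
    {A₁ B₁ C₁ A₂ B₂ C₂ A₃ B₃ : Type*}
    [AddCommGroup A₁] [Module R A₁] [AddCommGroup B₁] [Module R B₁]
    [AddCommGroup C₁] [Module R C₁] [AddCommGroup A₂] [Module R A₂]
    [AddCommGroup B₂] [Module R B₂] [AddCommGroup C₂] [Module R C₂]
    [AddCommGroup A₃] [Module R A₃] [AddCommGroup B₃] [Module R B₃]
    (f₁ : A₁ →ₗ[R] B₁) (g₁ : B₁ →ₗ[R] C₁)
    (f₂ : A₂ →ₗ[R] B₂) (g₂ : B₂ →ₗ[R] C₂)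
    (f₃ : A₃ →ₗ[R] B₃)
    (α₁ : A₁ →ₗ[R] A₂) (α₂ : A₂ →ₗ[R] A₃)
    (β₁ : B₁ →ₗ[R] B₂) (β₂ : B₂ →ₗ[R] B₃)
    (γ₁ : C₁ →ₗ[R] C₂)
    (hsq₁ : β₁ ∘ₗ f₁ = f₂ ∘ₗ α₁) (hsq₂ : γ₁ ∘ₗ g₁ = g₂ ∘ₗ β₁)
    (hsq₃ : β₂ ∘ₗ f₂ = f₃ ∘ₗ α₂)
    (hrow₁ : LinearMap.range f₁ = LinearMap.ker g₁)
    (hrow₂ : LinearMap.range f₂ = LinearMap.ker g₂)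
    (hcolA : LinearMap.range α₁ = LinearMap.ker α₂)
    (hcolB : LinearMap.range β₁ = LinearMap.ker β₂)
    (F₁ : ↥(LinearMap.ker α₁) →ₗ[R] ↥(LinearMap.ker β₁))
    (hF₁ : ∀ x : ↥(LinearMap.ker α₁), ((F₁ x : B₁)) = f₁ (x : A₁))
    (G₁ : ↥(LinearMap.ker β₁) →ₗ[R] ↥(LinearMap.ker γ₁))
    (hG₁ : ∀ x : ↥(LinearMap.ker β₁), ((G₁ x : C₁)) = g₁ (x : B₁))
    (H₁ : ↥(LinearMap.ker f₁) →ₗ[R] ↥(LinearMap.ker f₂))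
    (hH₁ : ∀ x : ↥(LinearMap.ker f₁), ((H₁ x : A₂)) = α₁ (x : A₁))
    (H₂ : ↥(LinearMap.ker f₂) →ₗ[R] ↥(LinearMap.ker f₃))
    (hH₂ : ∀ x : ↥(LinearMap.ker f₂), ((H₂ x : A₃)) = α₂ (x : A₂)) :
    Nonempty (
      (↥(LinearMap.ker G₁) ⧸
        (LinearMap.range F₁).comap (LinearMap.ker G₁).subtype)
      ≃ₗ[R]
      (↥(LinearMap.ker H₂) ⧸
        (LinearMap.range H₁).comap (LinearMap.ker H₂).subtype)) := by
  classical
  set K : Submodule R A₁ := LinearMap.ker (f₂ ∘ₗ α₁) with hK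
  have hKmem : ∀ a : A₁, a ∈ K ↔ f₂ (α₁ a) = 0 := fun a => Iff.rfl
  have hcomm : ∀ a : A₁, β₁ (f₁ a) = f₂ (α₁ a) :=
    fun a => LinearMap.congr_fun hsq₁ a
  -- the map K → ker β₁
  have hmem1 : ∀ a : ↥K, (f₁ ∘ₗ K.subtype) a ∈ LinearMap.ker β₁ := by
    intro a
    have ha := (hKmem (a : A₁)).mp a.2
    simp only [LinearMap.coe_comp, Function.comp_apply, Submodule.coe_subtype,
      LinearMap.mem_ker]
    rw [hcomm, ha]
  let e₀ : ↥K →ₗ[R] ↥(LinearMap.ker β₁) :=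
    LinearMap.codRestrict _ (f₁ ∘ₗ K.subtype) hmem1
  have he₀ : ∀ a : ↥K, ((e₀ a : B₁)) = f₁ (a : A₁) := fun a => rfl
  have hmem2 : ∀ a : ↥K, e₀ a ∈ LinearMap.ker G₁ := by
    intro a
    rw [LinearMap.mem_ker, Subtype.ext_iff]
    rw [hG₁]
    have : f₁ (a : A₁) ∈ LinearMap.ker g₁ := by
      rw [← hrow₁]; exact ⟨a, rfl⟩
    simpa [he₀] using this
  let e : ↥K →ₗ[R] ↥(LinearMap.ker G₁) := LinearMap.codRestrict _ e₀ hmem2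
  let ψ : ↥K →ₗ[R]
      (↥(LinearMap.ker G₁) ⧸ (LinearMap.range F₁).comap (LinearMap.ker G₁).subtype) :=
    ((LinearMap.range F₁).comap (LinearMap.ker G₁).subtype).mkQ ∘ₗ e
  -- the map K → ker f₂
  have hmem1' : ∀ a : ↥K, (α₁ ∘ₗ K.subtype) a ∈ LinearMap.ker f₂ := by
    intro a
    have ha := (hKmem (a : A₁)).mp a.2
    simpa [LinearMap.mem_ker] using ha
  let e₀' : ↥K →ₗ[R] ↥(LinearMap.ker f₂) :=
    LinearMap.codRestrict _ (α₁ ∘ₗ K.subtype) hmem1'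
  have he₀' : ∀ a : ↥K, ((e₀' a : A₂)) = α₁ (a : A₁) := fun a => rfl
  have hmem2' : ∀ a : ↥K, e₀' a ∈ LinearMap.ker H₂ := by
    intro a
    rw [LinearMap.mem_ker, Subtype.ext_iff]
    rw [hH₂]
    have : α₁ (a : A₁) ∈ LinearMap.ker α₂ := by
      rw [← hcolA]; exact ⟨a, rfl⟩
    simpa [he₀'] using this
  let e' : ↥K →ₗ[R] ↥(LinearMap.ker H₂) := LinearMap.codRestrict _ e₀' hmem2'
  let ψ' : ↥K →ₗ[R]
      (↥(LinearMap.ker H₂) ⧸ (LinearMap.range H₁).comap (LinearMap.ker H₂).subtype) :=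
    ((LinearMap.range H₁).comap (LinearMap.ker H₂).subtype).mkQ ∘ₗ e'
  -- surjectivity of ψ
  have hψsurj : Function.Surjective ψ := by
    intro q
    obtain ⟨x, rfl⟩ := Submodule.mkQ_surjective _ q
    have hx : g₁ ((x : ↥(LinearMap.ker β₁)) : B₁) = 0 := by
      have := x.2
      rw [LinearMap.mem_ker, Subtype.ext_iff] at this
      rw [← hG₁]
      simpa using this
    have : ((x : ↥(LinearMap.ker β₁)) : B₁) ∈ LinearMap.range f₁ := by
      rw [hrow₁]; exact hx
    obtain ⟨a, ha⟩ := this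
    have haK : a ∈ K := by
      rw [hKmem, ← hcomm, ha]
      exact ((x : ↥(LinearMap.ker β₁))).2
    refine ⟨⟨a, haK⟩, ?_⟩
    show Submodule.mkQ _ (e ⟨a, haK⟩) = Submodule.mkQ _ x
    congr 1
    ext
    simpa [e, e₀] using ha
  -- surjectivity of ψ'
  have hψ'surj : Function.Surjective ψ' := by
    intro q
    obtain ⟨x, rfl⟩ := Submodule.mkQ_surjective _ q
    have hx : ((x : ↥(LinearMap.ker f₂)) : A₂) ∈ LinearMap.range α₁ := by
      rw [hcolA, LinearMap.mem_ker, ← hH₂]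
      have := x.2
      rw [LinearMap.mem_ker, Subtype.ext_iff] at this
      simpa using this
    obtain ⟨a, ha⟩ := hx
    have haK : a ∈ K := by
      rw [hKmem, ha]
      exact ((x : ↥(LinearMap.ker f₂))).2
    refine ⟨⟨a, haK⟩, ?_⟩
    show Submodule.mkQ _ (e' ⟨a, haK⟩) = Submodule.mkQ _ x
    congr 1
    ext
    simpa [e', e₀'] using ha
  -- kernels agree
  have hkerψ : ∀ a : ↥K, a ∈ LinearMap.ker ψ ↔
      ∃ y : A₁, α₁ y = 0 ∧ f₁ y = f₁ (a : A₁) := by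
    intro a
    constructor
    · intro h
      rw [LinearMap.mem_ker] at h
      have : e a ∈ (LinearMap.range F₁).comap (LinearMap.ker G₁).subtype := by
        rwa [← Submodule.Quotient.mk_eq_zero]
      obtain ⟨y, hy⟩ := this
      refine ⟨(y : A₁), y.2, ?_⟩
      rw [← hF₁ y, hy]
      rfl
    · rintro ⟨y, hy1, hy2⟩
      rw [LinearMap.mem_ker]
      show Submodule.mkQ _ (e a) = 0
      rw [Submodule.mkQ_apply, Submodule.Quotient.mk_eq_zero]
      refine ⟨⟨y, hy1⟩, ?_⟩
      ext
      rw [hF₁]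
      exact hy2
  have hkerψ' : ∀ a : ↥K, a ∈ LinearMap.ker ψ' ↔
      ∃ y : A₁, f₁ y = 0 ∧ α₁ y = α₁ (a : A₁) := by
    intro a
    constructor
    · intro h
      rw [LinearMap.mem_ker] at h
      have : e' a ∈ (LinearMap.range H₁).comap (LinearMap.ker H₂).subtype := by
        rwa [← Submodule.Quotient.mk_eq_zero]
      obtain ⟨y, hy⟩ := this
      refine ⟨(y : A₁), y.2, ?_⟩
      rw [← hH₁ y, hy]
      rfl
    · rintro ⟨y, hy1, hy2⟩
      rw [LinearMap.mem_ker]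
      show Submodule.mkQ _ (e' a) = 0
      rw [Submodule.mkQ_apply, Submodule.Quotient.mk_eq_zero]
      refine ⟨⟨y, hy1⟩, ?_⟩
      ext
      rw [hH₁]
      exact hy2
  have hkers : LinearMap.ker ψ = LinearMap.ker ψ' := by
    ext a
    rw [hkerψ, hkerψ']
    constructor
    · rintro ⟨y, hy1, hy2⟩
      refine ⟨(a : A₁) - y, ?_, ?_⟩
      · rw [map_sub, hy2, sub_self]
      · rw [map_sub, hy1, sub_zero]
    · rintro ⟨y, hy1, hy2⟩
      refine ⟨(a : A₁) - y, ?_, ?_⟩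
      · rw [map_sub, hy2, sub_self]
      · rw [map_sub, hy1, sub_zero]
  exact ⟨((ψ.quotKerEquivOfSurjective hψsurj).symm.trans
    (Submodule.quotEquivOfEq _ _ hkers)).trans
    (ψ'.quotKerEquivOfSurjective hψ'surj)⟩
end

section
/- (Cokernel Complex Lemma.) Let M i j (i, j ≥ 1) with horizontal maps h i j : M i (j+1) → M i j and vertical maps v i j : M (i+1) j → M i j form a commutative co-grid with exact rows and exact columns (so row i is ⋯ → M i 3 → M i 2 → M i 1 and column j is ⋯ → M 3 j → M 2 j → M 1 j). Let W i = Cok(h i 1 : M i 2 → M i 1) with maps ω i : W (i+1) → W i induced by v i 1, and let U j = Cok(v 1 j : M 2 j → M 1 j) with maps υ j : U (j+1) → U j induced by h 1 j. Then for every n ≥ 1, the homology at position n (counted from the right end) of the cokernel complex ⋯ → W₃ → W₂ → W₁ → 0 is isomorphic as an R-module to the homology at position n of the cokernel complex ⋯ → U₃ → U₂ → U₁ → 0. (Here homology at position 1 means Cok ω₁ = W₁/Im ω₁, resp. Cok υ₁; homology at position n ≥ 2 means Ker ωₙ₋₁ / Im ωₙ, resp. Ker υₙ₋₁ / Im υₙ.)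 -/
/-!
Both homologies are computed by one invariant of the grid: for the square with corner `M i j`,
`cornerSubquotient h v i j = (Im h i j ⊓ Im v i j) / Im (v i j ∘ h (i+1) j)`.
The homology of the `W`-complex at position `n + 2` is
`v n 0⁻¹(Im h n 0) / (Im v (n+1) 0 + Im h (n+1) 0)`, which `v n 0` maps isomorphically onto
the corner subquotient at `(n, 0)`, since its kernel `Im v (n+1) 0` lies in the denominator;
symmetrically the homology of the `U`-complex is the corner subquotient at `(0, n)`.
By exactness and commutativity, the preimage of `Im h i (j+1)` under `v i (j+1)` is the kernel
of `h i j ∘ v i (j+1) = v i j ∘ h (i+1) j`, which is also the preimage of `Im v (i+1) j` under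
`h (i+1) j`; hence the corner subquotients at `(i, j+1)` and `(i+1, j)` agree, and the corner
subquotient is constant along anti-diagonals. At position `1` both cokernels are
`M 0 0 / (Im h 0 0 + Im v 0 0)`.
-/

open Submodule LinearMap

section QuotientModules

variable {R : Type*} [Ring R] {N N₀ N₁ N₂ : Type*} [AddCommGroup N] [Module R N]
  [AddCommGroup N₀] [Module R N₀] [AddCommGroup N₁] [Module R N₁] [AddCommGroup N₂] [Module R N₂]

abbrev Subquotient (p q : Submodule R N) : Type _ :=
  ↥p ⧸ q.comap p.subtype

namespace Subquotient

def equivOfEq {p p' q q' : Submodule R N} (hp : p = p') (hq : q = q') :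
    Subquotient p q ≃ₗ[R] Subquotient p' q' := by
  subst hp hq
  exact LinearEquiv.refl R _

noncomputable def comapEquivInfRange (f : N₁ →ₗ[R] N₀) (T : Submodule R N₀)
    (K : Submodule R N₁) :
    Subquotient (T.comap f) (ker f ⊔ K) ≃ₗ[R] Subquotient (T ⊓ range f) (K.map f) :=
  let φ : T.comap f →ₗ[R] ↥(T ⊓ range f) :=
    f.restrict fun x hx => ⟨hx, mem_range_self f x⟩
  have hφ : Function.Surjective φ := by
    rintro ⟨_, hy, x, rfl⟩
    exact ⟨⟨x, hy⟩, rfl⟩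
  let ψ := ((K.map f).comap (T ⊓ range f).subtype).mkQ ∘ₗ φ
  have hker : ker ψ = (ker f ⊔ K).comap (T.comap f).subtype := by
    have hφf : (T ⊓ range f).subtype ∘ₗ φ = f ∘ₗ (T.comap f).subtype := rfl
    rw [ker_comp, ker_mkQ, ← comap_comp, hφf, comap_comp, comap_map_eq, sup_comm]
  quotEquivOfEq _ _ hker.symm ≪≫ₗ ψ.quotKerEquivOfSurjective ((mkQ_surjective _).comp hφ)

end Subquotient

theorem range_eq_map_mkQ_of_comp_mkQ {P₁ : Submodule R N₁} {P₀ : Submodule R N₀}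
    {f : N₁ →ₗ[R] N₀} {ω : (N₁ ⧸ P₁) →ₗ[R] (N₀ ⧸ P₀)} (hω : ω ∘ₗ P₁.mkQ = P₀.mkQ ∘ₗ f) :
    range ω = (range f).map P₀.mkQ := by
  rw [← range_comp, ← hω, range_comp, range_mkQ, Submodule.map_top]

noncomputable def quotientRangeEquivOfComp {P₁ : Submodule R N₁} {P₀ : Submodule R N₀}
    {f : N₁ →ₗ[R] N₀} {ω : (N₁ ⧸ P₁) →ₗ[R] (N₀ ⧸ P₀)} (hω : ω ∘ₗ P₁.mkQ = P₀.mkQ ∘ₗ f) :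
    ((N₀ ⧸ P₀) ⧸ range ω) ≃ₗ[R] N₀ ⧸ (P₀ ⊔ range f) :=
  quotEquivOfEq _ _ (range_eq_map_mkQ_of_comp_mkQ hω) ≪≫ₗ
    quotientQuotientEquivQuotientSup P₀ (range f)

noncomputable def Subquotient.kerRangeEquivOfComp {P₂ : Submodule R N₂}
    {P₁ : Submodule R N₁} {P₀ : Submodule R N₀} {g : N₂ →ₗ[R] N₁} {f : N₁ →ₗ[R] N₀}
    {ω₁ : (N₂ ⧸ P₂) →ₗ[R] (N₁ ⧸ P₁)} {ω₀ : (N₁ ⧸ P₁) →ₗ[R] (N₀ ⧸ P₀)}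
    (hω₁ : ω₁ ∘ₗ P₂.mkQ = P₁.mkQ ∘ₗ g) (hω₀ : ω₀ ∘ₗ P₁.mkQ = P₀.mkQ ∘ₗ f) :
    Subquotient (ker ω₀) (range ω₁) ≃ₗ[R] Subquotient (P₀.comap f) (range g ⊔ P₁) :=
  have hcomap : (ker ω₀).comap P₁.mkQ = P₀.comap f := by
    rw [← ker_comp, hω₀, ker_comp, ker_mkQ]
  equivOfEq (by rw [range_mkQ, inf_top_eq] : ker ω₀ = ker ω₀ ⊓ range P₁.mkQ)
      (range_eq_map_mkQ_of_comp_mkQ hω₁) ≪≫ₗ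
    (comapEquivInfRange P₁.mkQ (ker ω₀) (range g)).symm ≪≫ₗ
    equivOfEq hcomap (by rw [ker_mkQ, sup_comm])

end QuotientModules

section Grid

variable {R : Type*} [Ring R] {M : ℕ → ℕ → Type*} [∀ i j, AddCommGroup (M i j)]
  [∀ i j, Module R (M i j)] (h : ∀ i j, M i (j + 1) →ₗ[R] M i j)
  (v : ∀ i j, M (i + 1) j →ₗ[R] M i j)

abbrev cornerSubquotient (i j : ℕ) : Type _ :=
  Subquotient (range (h i j) ⊓ range (v i j)) (range (v i j ∘ₗ h (i + 1) j))

variable {h v}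

noncomputable def vPreimageEquivCorner
    (hcol : ∀ i j, range (v (i + 1) j) = ker (v i j)) (i j : ℕ) :
    Subquotient ((range (h i j)).comap (v i j)) (range (v (i + 1) j) ⊔ range (h (i + 1) j))
      ≃ₗ[R] cornerSubquotient h v i j :=
  Subquotient.equivOfEq rfl (by rw [hcol]) ≪≫ₗ
    Subquotient.comapEquivInfRange (v i j) _ _ ≪≫ₗ
    Subquotient.equivOfEq rfl (range_comp _ _).symm

noncomputable def hPreimageEquivCorner
    (hcomm : ∀ i j, h i j ∘ₗ v i (j + 1) = v i j ∘ₗ h (i + 1) j)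
    (hrow : ∀ i j, range (h i (j + 1)) = ker (h i j)) (i j : ℕ) :
    Subquotient ((range (v i j)).comap (h i j)) (range (h i (j + 1)) ⊔ range (v i (j + 1)))
      ≃ₗ[R] cornerSubquotient h v i j :=
  Subquotient.equivOfEq rfl (by rw [hrow]) ≪≫ₗ
    Subquotient.comapEquivInfRange (h i j) _ _ ≪≫ₗ
    Subquotient.equivOfEq (inf_comm _ _) (by rw [← range_comp, hcomm])

theorem comap_range_h_eq_comap_range_v
    (hcomm : ∀ i j, h i j ∘ₗ v i (j + 1) = v i j ∘ₗ h (i + 1) j)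
    (hrow : ∀ i j, range (h i (j + 1)) = ker (h i j))
    (hcol : ∀ i j, range (v (i + 1) j) = ker (v i j)) (i j : ℕ) :
    (range (h i (j + 1))).comap (v i (j + 1)) = (range (v (i + 1) j)).comap (h (i + 1) j) := by
  rw [hrow, hcol, ← ker_comp, ← ker_comp, hcomm]

noncomputable def cornerEquivCornerSucc
    (hcomm : ∀ i j, h i j ∘ₗ v i (j + 1) = v i j ∘ₗ h (i + 1) j)
    (hrow : ∀ i j, range (h i (j + 1)) = ker (h i j))
    (hcol : ∀ i j, range (v (i + 1) j) = ker (v i j)) (i j : ℕ) :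
    cornerSubquotient h v i (j + 1) ≃ₗ[R] cornerSubquotient h v (i + 1) j :=
  (vPreimageEquivCorner hcol i (j + 1)).symm ≪≫ₗ
    Subquotient.equivOfEq (comap_range_h_eq_comap_range_v hcomm hrow hcol i j) (sup_comm _ _) ≪≫ₗ
    hPreimageEquivCorner hcomm hrow (i + 1) j

theorem nonempty_cornerEquiv_add
    (hcomm : ∀ i j, h i j ∘ₗ v i (j + 1) = v i j ∘ₗ h (i + 1) j)
    (hrow : ∀ i j, range (h i (j + 1)) = ker (h i j))
    (hcol : ∀ i j, range (v (i + 1) j) = ker (v i j)) (i j : ℕ) :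
    Nonempty (cornerSubquotient h v i j ≃ₗ[R] cornerSubquotient h v (i + j) 0) := by
  induction j generalizing i with
  | zero => exact ⟨LinearEquiv.refl R _⟩
  | succ j ih =>
    obtain ⟨e⟩ := ih (i + 1)
    rw [Nat.add_right_comm] at e
    exact ⟨cornerEquivCornerSucc hcomm hrow hcol i j ≪≫ₗ e⟩

end Grid

-- Indices start at `0`, where the paper's start at `1`.
/-- The Cokernel Complex Lemma.  Given a commutative co-grid of `R`-modules
`M i j` (indexed from `0`, corresponding to the indices `≥ 1` of the paper)
with horizontal maps `h i j : M i (j+1) → M i j` and vertical maps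
`v i j : M (i+1) j → M i j`, commuting squares, exact rows and exact columns,
let `W i = Cok (h i 0)` with maps `ω i : W (i+1) → W i` induced by `v i 0`,
and `U j = Cok (v 0 j)` with maps `υ j : U (j+1) → U j` induced by `h 0 j`.
Then the two cokernel complexes `⋯ → W 1 → W 0 → 0` and `⋯ → U 1 → U 0 → 0`
have isomorphic homology in each position: at the rightmost position the
homology is `Cok (ω 0)` (resp. `Cok (υ 0)`), and at position `n + 2` from the
right it is `Ker (ω n) / Im (ω (n+1))` (resp. `Ker (υ n) / Im (υ (n+1))`). -/
theorem cokernel_complex_lemma {R : Type*} [Ring R]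
    (M : ℕ → ℕ → Type*) [∀ i j, AddCommGroup (M i j)] [∀ i j, Module R (M i j)]
    (h : ∀ i j, M i (j + 1) →ₗ[R] M i j)
    (v : ∀ i j, M (i + 1) j →ₗ[R] M i j)
    (hcomm : ∀ i j, (h i j) ∘ₗ (v i (j + 1)) = (v i j) ∘ₗ (h (i + 1) j))
    (hrow : ∀ i j, LinearMap.range (h i (j + 1)) = LinearMap.ker (h i j))
    (hcol : ∀ i j, LinearMap.range (v (i + 1) j) = LinearMap.ker (v i j))
    (ω : ∀ i, (M (i + 1) 0 ⧸ LinearMap.range (h (i + 1) 0)) →ₗ[R]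
      (M i 0 ⧸ LinearMap.range (h i 0)))
    (hω : ∀ i, (ω i) ∘ₗ (LinearMap.range (h (i + 1) 0)).mkQ =
      (LinearMap.range (h i 0)).mkQ ∘ₗ (v i 0))
    (υ : ∀ j, (M 0 (j + 1) ⧸ LinearMap.range (v 0 (j + 1))) →ₗ[R]
      (M 0 j ⧸ LinearMap.range (v 0 j)))
    (hυ : ∀ j, (υ j) ∘ₗ (LinearMap.range (v 0 (j + 1))).mkQ =
      (LinearMap.range (v 0 j)).mkQ ∘ₗ (h 0 j)) :
    Nonempty (
      ((M 0 0 ⧸ LinearMap.range (h 0 0)) ⧸ LinearMap.range (ω 0))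
      ≃ₗ[R]
      ((M 0 0 ⧸ LinearMap.range (v 0 0)) ⧸ LinearMap.range (υ 0))) ∧
    ∀ n : ℕ, Nonempty (
      (↥(LinearMap.ker (ω n)) ⧸
        (LinearMap.range (ω (n + 1))).comap (LinearMap.ker (ω n)).subtype)
      ≃ₗ[R]
      (↥(LinearMap.ker (υ n)) ⧸
        (LinearMap.range (υ (n + 1))).comap (LinearMap.ker (υ n)).subtype)) := by
  refine ⟨⟨quotientRangeEquivOfComp (hω 0) ≪≫ₗ quotEquivOfEq _ _ (sup_comm _ _) ≪≫ₗ
    (quotientRangeEquivOfComp (hυ 0)).symm⟩, fun n => ?_⟩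
  obtain ⟨e⟩ := nonempty_cornerEquiv_add hcomm hrow hcol 0 n
  rw [Nat.zero_add] at e
  exact ⟨Subquotient.kerRangeEquivOfComp (hω (n + 1)) (hω n) ≪≫ₗ
    vPreimageEquivCorner hcol n 0 ≪≫ₗ e.symm ≪≫ₗ (hPreimageEquivCorner hcomm hrow 0 n).symm ≪≫ₗ
    (Subquotient.kerRangeEquivOfComp (hυ (n + 1)) (hυ n)).symm⟩
end

section
/- Let R be a commutative ring, let 0 → A → B →g→ C → 0 be a short exact sequence of R-modules, and let X →u→ Y →v→ Z → 0 be an exact sequence of R-modules (exact at Y and with v surjective). Form the commutative diagram of Hom-modules with exact rows and columns whose rows are 0 → Hom(Z,M) → Hom(Y,M) → Hom(X,M) (induced by v and u) for M = A, B, C, and whose columns are 0 → Hom(W,A) → Hom(W,B) → Hom(W,C) (induced by the maps of the short exact sequence) for W = Z, Y, X. Then the two cokernel complexes 0 → Cok(Hom(Z,g)) → Cok(Hom(Y,g)) → Cok(Hom(X,g)) → 0 and 0 → Cok(Hom(u,A)) → Cok(Hom(u,B)) → Cok(Hom(u,C)) → 0, with the induced maps, have isomorphic homology at each of the three positions: the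 kernel of the first map of one complex is isomorphic to the kernel of the first map of the other; the middle homologies (kernel of second map modulo image of first map) are isomorphic; and the cokernels of the second maps are isomorphic. -/
/-!
Write `M i j = Hom(W i, N j)` for `W = (Z, Y, X)` and `N = (A, B, C)`: a commutative 3 × 3 grid
whose rows and columns are left exact. The cokernel complex of the rows and that of the columns
are both computed from the grid by descriptions that are symmetric under transposing it: their
homology is, at the three positions,
`{ψ : Y → B | g ∘ ψ ∘ u = 0} / (im Hom(Y, f) + im Hom(v, B))`,
`(im Hom(u, C) ∩ im Hom(X, g)) / {g ∘ ψ ∘ u | ψ : Y → B}` and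
`Hom(X, C) / (im Hom(u, C) + im Hom(X, g))`.
Each description comes from transporting subquotients along the maps of the grid.
-/

open LinearMap Submodule

namespace Submodule

variable {R M N : Type*} [Ring R] [AddCommGroup M] [Module R M] [AddCommGroup N] [Module R N]

noncomputable def subquotientEquivOfMap (h : M →ₗ[R] N) {p q : Submodule R M}
    {P Q : Submodule R N} (hp : p.map h = P) (hq : p ⊓ Q.comap h = p ⊓ q) :
    (p ⧸ q.comap p.subtype) ≃ₗ[R] (P ⧸ Q.comap P.subtype) :=
  let h' : p →ₗ[R] P := h.restrict fun _ hx => hp ▸ mem_map_of_mem hx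
  have surj : Function.Surjective ((Q.comap P.subtype).mkQ ∘ₗ h') := by
    refine (mkQ_surjective _).comp ?_
    rintro ⟨y, hy⟩
    obtain ⟨x, hx, rfl⟩ := hp ▸ hy
    exact ⟨⟨x, hx⟩, rfl⟩
  have hker : q.comap p.subtype = ker ((Q.comap P.subtype).mkQ ∘ₗ h') := by
    ext ⟨x, hx⟩
    have := SetLike.ext_iff.mp hq x
    simp only [mem_inf, mem_comap, hx, true_and] at this
    simp [h', this]
  (quotEquivOfEq _ _ hker).trans (quotKerEquivOfSurjective _ surj)

end Submodule

namespace LinearMap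

section QuotientMap

variable {R M N : Type*} [Ring R] [AddCommGroup M] [Module R M] [AddCommGroup N] [Module R N]
  {p : Submodule R M} {c : M →ₗ[R] N}

theorem comap_mkQ_ker_of_comp_mkQ {q : Submodule R N} {Φ : (M ⧸ p) →ₗ[R] (N ⧸ q)}
    (hΦ : Φ ∘ₗ p.mkQ = q.mkQ ∘ₗ c) : (ker Φ).comap p.mkQ = q.comap c := by
  rw [← ker_comp, hΦ, ker_comp, ker_mkQ]

theorem range_eq_map_mkQ_of_comp_mkQ {q : Submodule R N} {Φ : (M ⧸ p) →ₗ[R] (N ⧸ q)}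
    (hΦ : Φ ∘ₗ p.mkQ = q.mkQ ∘ₗ c) : range Φ = (range c).map q.mkQ := by
  rw [← range_comp_of_range_eq_top Φ (range_mkQ p), hΦ, range_comp]

noncomputable def kerEquivOfInjective {q : Submodule R N} {Φ : (M ⧸ p) →ₗ[R] (N ⧸ q)}
    (hc : Function.Injective c) (hΦ : Φ ∘ₗ p.mkQ = q.mkQ ∘ₗ c) :
    ker Φ ≃ₗ[R] ↥(range c ⊓ q) ⧸ (p.map c).comap (range c ⊓ q).subtype :=
  (quotEquivOfEqBot ((⊥ : Submodule R (M ⧸ p)).comap (ker Φ).subtype)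
      (by rw [comap_bot, ker_subtype])).symm ≪≫ₗ
    (subquotientEquivOfMap p.mkQ (map_comap_eq_of_surjective (mkQ_surjective p) _)
      (by rw [comap_bot, ker_mkQ])).symm ≪≫ₗ
    subquotientEquivOfMap c (by rw [comap_mkQ_ker_of_comp_mkQ hΦ, map_comap_eq])
      (by rw [comap_map_eq_of_injective hc])

noncomputable def kerEquivOfExact {K L P : Type*} [AddCommGroup K] [Module R K]
    [AddCommGroup L] [Module R L] [AddCommGroup P] [Module R P]
    {a : K →ₗ[R] L} {b : L →ₗ[R] N} {d : N →ₗ[R] P} (hab : Function.Exact a b)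
    (hc : Function.Injective c) (hcd : Function.Exact c d) {s : Submodule R L}
    (hs : s.map b = p.map c) {Φ : (M ⧸ p) →ₗ[R] (N ⧸ range b)}
    (hΦ : Φ ∘ₗ p.mkQ = (range b).mkQ ∘ₗ c) :
    ker Φ ≃ₗ[R] ker (d ∘ₗ b) ⧸ (range a ⊔ s).comap (ker (d ∘ₗ b)).subtype :=
  kerEquivOfInjective hc hΦ ≪≫ₗ
    (subquotientEquivOfMap b (Q := p.map c)
      (by rw [ker_comp, hcd.linearMap_ker_eq, map_comap_eq, inf_comm])
      (by rw [← hs, comap_map_eq, hab.linearMap_ker_eq, sup_comm])).symm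

noncomputable def homologyEquivOfExact {P : Type*} [AddCommGroup P] [Module R P]
    {d : N →ₗ[R] P} (hcd : Function.Exact c d) {q : Submodule R N} {r : Submodule R P}
    {Φ₁ : (M ⧸ p) →ₗ[R] (N ⧸ q)} {Φ₂ : (N ⧸ q) →ₗ[R] (P ⧸ r)}
    (hΦ₁ : Φ₁ ∘ₗ p.mkQ = q.mkQ ∘ₗ c) (hΦ₂ : Φ₂ ∘ₗ q.mkQ = r.mkQ ∘ₗ d) :
    (ker Φ₂ ⧸ (range Φ₁).comap (ker Φ₂).subtype) ≃ₗ[R]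
      ↥(range d ⊓ r) ⧸ (q.map d).comap (range d ⊓ r).subtype :=
  (subquotientEquivOfMap q.mkQ (map_comap_eq_of_surjective (mkQ_surjective q) _) rfl).symm ≪≫ₗ
    subquotientEquivOfMap d (by rw [comap_mkQ_ker_of_comp_mkQ hΦ₂, map_comap_eq])
      (by rw [comap_map_eq, range_eq_map_mkQ_of_comp_mkQ hΦ₁, comap_map_mkQ,
        hcd.linearMap_ker_eq, sup_comm])

noncomputable def quotRangeEquivQuotSup {q : Submodule R N} {Φ : (M ⧸ p) →ₗ[R] (N ⧸ q)}
    (hΦ : Φ ∘ₗ p.mkQ = q.mkQ ∘ₗ c) : ((N ⧸ q) ⧸ range Φ) ≃ₗ[R] N ⧸ (q ⊔ range c) :=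
  quotEquivOfEq _ _ (range_eq_map_mkQ_of_comp_mkQ hΦ) ≪≫ₗ quotientQuotientEquivQuotientSup q _

end QuotientMap

section Hom

variable {R A B C X Y W : Type*} [CommRing R] [AddCommGroup A] [Module R A]
  [AddCommGroup B] [Module R B] [AddCommGroup C] [Module R C] [AddCommGroup X] [Module R X]
  [AddCommGroup Y] [Module R Y] [AddCommGroup W] [Module R W]

theorem exact_llcomp_of_exact_of_injective {f : A →ₗ[R] B} {g : B →ₗ[R] C}
    (hfg : Function.Exact f g) (hf : Function.Injective f) :
    Function.Exact (llcomp (σ₁₂ := RingHom.id R) R W A B f)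
      (llcomp (σ₁₂ := RingHom.id R) R W B C g) := by
  intro ψ
  refine ⟨fun hψ => ?_, ?_⟩
  · have hmem (w : W) : ψ w ∈ range f := by
      rw [← hfg.linearMap_ker_eq, mem_ker]
      exact congr($hψ w)
    refine ⟨(LinearEquiv.ofInjective f hf).symm.toLinearMap ∘ₗ ψ.codRestrict _ hmem, ?_⟩
    ext w
    exact congr_arg Subtype.val ((LinearEquiv.ofInjective f hf).apply_symm_apply ⟨ψ w, hmem w⟩)
  · rintro ⟨α, rfl⟩
    simp only [llcomp_apply', ← comp_assoc, hfg.linearMap_comp_eq_zero, zero_comp]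

theorem lcomp_comp_llcomp (u : X →ₗ[R] Y) (g : B →ₗ[R] C) :
    lcomp R C u ∘ₗ llcomp (σ₁₂ := RingHom.id R) R Y B C g =
      llcomp (σ₁₂ := RingHom.id R) R X B C g ∘ₗ lcomp R B u :=
  rfl

end Hom

end LinearMap

theorem hom_cokernel_complexes_general {R : Type*} [CommRing R]
    {A B C X Y Z : Type*}
    [AddCommGroup A] [Module R A] [AddCommGroup B] [Module R B]
    [AddCommGroup C] [Module R C] [AddCommGroup X] [Module R X]
    [AddCommGroup Y] [Module R Y] [AddCommGroup Z] [Module R Z]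
    (f : A →ₗ[R] B) (g : B →ₗ[R] C)
    (hf : Function.Injective f)
    (hfg : LinearMap.range f = LinearMap.ker g)
    (u : X →ₗ[R] Y) (v : Y →ₗ[R] Z)
    (hv : Function.Surjective v)
    (huv : LinearMap.range u = LinearMap.ker v)
    (Φ₁ : ((Z →ₗ[R] C) ⧸ LinearMap.range (LinearMap.llcomp (σ₁₂ := RingHom.id R) R Z B C g)) →ₗ[R]
          ((Y →ₗ[R] C) ⧸ LinearMap.range (LinearMap.llcomp (σ₁₂ := RingHom.id R) R Y B C g)))
    (hΦ₁ : Φ₁ ∘ₗ (LinearMap.range (LinearMap.llcomp (σ₁₂ := RingHom.id R) R Z B C g)).mkQ =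
      (LinearMap.range (LinearMap.llcomp (σ₁₂ := RingHom.id R) R Y B C g)).mkQ ∘ₗ LinearMap.lcomp R C v)
    (Φ₂ : ((Y →ₗ[R] C) ⧸ LinearMap.range (LinearMap.llcomp (σ₁₂ := RingHom.id R) R Y B C g)) →ₗ[R]
          ((X →ₗ[R] C) ⧸ LinearMap.range (LinearMap.llcomp (σ₁₂ := RingHom.id R) R X B C g)))
    (hΦ₂ : Φ₂ ∘ₗ (LinearMap.range (LinearMap.llcomp (σ₁₂ := RingHom.id R) R Y B C g)).mkQ =
      (LinearMap.range (LinearMap.llcomp (σ₁₂ := RingHom.id R) R X B C g)).mkQ ∘ₗ LinearMap.lcomp R C u)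
    (Ψ₁ : ((X →ₗ[R] A) ⧸ LinearMap.range (LinearMap.lcomp R A u)) →ₗ[R]
          ((X →ₗ[R] B) ⧸ LinearMap.range (LinearMap.lcomp R B u)))
    (hΨ₁ : Ψ₁ ∘ₗ (LinearMap.range (LinearMap.lcomp R A u)).mkQ =
      (LinearMap.range (LinearMap.lcomp R B u)).mkQ ∘ₗ LinearMap.llcomp (σ₁₂ := RingHom.id R) R X A B f)
    (Ψ₂ : ((X →ₗ[R] B) ⧸ LinearMap.range (LinearMap.lcomp R B u)) →ₗ[R]
          ((X →ₗ[R] C) ⧸ LinearMap.range (LinearMap.lcomp R C u)))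
    (hΨ₂ : Ψ₂ ∘ₗ (LinearMap.range (LinearMap.lcomp R B u)).mkQ =
      (LinearMap.range (LinearMap.lcomp R C u)).mkQ ∘ₗ LinearMap.llcomp (σ₁₂ := RingHom.id R) R X B C g) :
    Nonempty (↥(LinearMap.ker Φ₁) ≃ₗ[R] ↥(LinearMap.ker Ψ₁)) ∧
    Nonempty (
      (↥(LinearMap.ker Φ₂) ⧸
        (LinearMap.range Φ₁).comap (LinearMap.ker Φ₂).subtype)
      ≃ₗ[R]
      (↥(LinearMap.ker Ψ₂) ⧸
        (LinearMap.range Ψ₁).comap (LinearMap.ker Ψ₂).subtype)) ∧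
    Nonempty (
      (((X →ₗ[R] C) ⧸ LinearMap.range (LinearMap.llcomp (σ₁₂ := RingHom.id R) R X B C g)) ⧸
        LinearMap.range Φ₂)
      ≃ₗ[R]
      (((X →ₗ[R] C) ⧸ LinearMap.range (LinearMap.lcomp R C u)) ⧸
        LinearMap.range Ψ₂)) := by
  have hfg' : Function.Exact f g := exact_iff.mpr hfg.symm
  have huv' : Function.Exact u v := exact_iff.mpr huv.symm
  have hY := exact_llcomp_of_exact_of_injective (W := Y) hfg' hf
  have hX := exact_llcomp_of_exact_of_injective (W := X) hfg' hf
  have hB := exact_lcomp_of_exact_of_surjective B huv' hv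
  have hC := exact_lcomp_of_exact_of_surjective C huv' hv
  refine ⟨?_, ?_, ?_⟩
  · have row := Nonempty.intro <| kerEquivOfExact hY (lcomp_injective_of_surjective v hv) hC
      (s := range (lcomp R B v)) (by rw [← range_comp, ← range_comp, lcomp_comp_llcomp]) hΦ₁
    have col := Nonempty.intro <| kerEquivOfExact hB hf.injective_linearMapComp_left hX
      (s := range (llcomp (σ₁₂ := RingHom.id R) R Y A B f))
      (by rw [← range_comp, ← range_comp, lcomp_comp_llcomp]) hΨ₁
    rw [lcomp_comp_llcomp, sup_comm] at row
    exact ⟨row.some ≪≫ₗ col.some.symm⟩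
  · have row := Nonempty.intro <| homologyEquivOfExact hC hΦ₁ hΦ₂
    have col := Nonempty.intro <| homologyEquivOfExact hX hΨ₁ hΨ₂
    rw [← range_comp] at row col
    rw [lcomp_comp_llcomp, inf_comm] at row
    exact ⟨row.some ≪≫ₗ col.some.symm⟩
  · exact ⟨quotRangeEquivQuotSup hΦ₂ ≪≫ₗ quotEquivOfEq _ _ (sup_comm _ _) ≪≫ₗ
      (quotRangeEquivQuotSup hΨ₂).symm⟩

/-- Given a short exact sequence `0 → A → B →g→ C → 0` and a right exact
sequence `X →u→ Y →v→ Z → 0` of modules over a commutative ring `R`, the two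
cokernel complexes
`0 → Cok(Hom(Z,g)) → Cok(Hom(Y,g)) → Cok(Hom(X,g)) → 0` and
`0 → Cok(Hom(u,A)) → Cok(Hom(u,B)) → Cok(Hom(u,C)) → 0`
(with maps induced by precomposition with `v`, `u`, resp. postcomposition
with `f`, `g`) have isomorphic homology in each of the three positions. -/
theorem hom_cokernel_complexes {R : Type*} [CommRing R]
    {A B C X Y Z : Type*}
    [AddCommGroup A] [Module R A] [AddCommGroup B] [Module R B]
    [AddCommGroup C] [Module R C] [AddCommGroup X] [Module R X]
    [AddCommGroup Y] [Module R Y] [AddCommGroup Z] [Module R Z]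
    (f : A →ₗ[R] B) (g : B →ₗ[R] C)
    (hf : Function.Injective f) (hg : Function.Surjective g)
    (hfg : LinearMap.range f = LinearMap.ker g)
    (u : X →ₗ[R] Y) (v : Y →ₗ[R] Z)
    (hv : Function.Surjective v)
    (huv : LinearMap.range u = LinearMap.ker v)
    (Φ₁ : ((Z →ₗ[R] C) ⧸ LinearMap.range (LinearMap.llcomp (σ₁₂ := RingHom.id R) R Z B C g)) →ₗ[R]
          ((Y →ₗ[R] C) ⧸ LinearMap.range (LinearMap.llcomp (σ₁₂ := RingHom.id R) R Y B C g)))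
    (hΦ₁ : Φ₁ ∘ₗ (LinearMap.range (LinearMap.llcomp (σ₁₂ := RingHom.id R) R Z B C g)).mkQ =
      (LinearMap.range (LinearMap.llcomp (σ₁₂ := RingHom.id R) R Y B C g)).mkQ ∘ₗ LinearMap.lcomp R C v)
    (Φ₂ : ((Y →ₗ[R] C) ⧸ LinearMap.range (LinearMap.llcomp (σ₁₂ := RingHom.id R) R Y B C g)) →ₗ[R]
          ((X →ₗ[R] C) ⧸ LinearMap.range (LinearMap.llcomp (σ₁₂ := RingHom.id R) R X B C g)))
    (hΦ₂ : Φ₂ ∘ₗ (LinearMap.range (LinearMap.llcomp (σ₁₂ := RingHom.id R) R Y B C g)).mkQ =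
      (LinearMap.range (LinearMap.llcomp (σ₁₂ := RingHom.id R) R X B C g)).mkQ ∘ₗ LinearMap.lcomp R C u)
    (Ψ₁ : ((X →ₗ[R] A) ⧸ LinearMap.range (LinearMap.lcomp R A u)) →ₗ[R]
          ((X →ₗ[R] B) ⧸ LinearMap.range (LinearMap.lcomp R B u)))
    (hΨ₁ : Ψ₁ ∘ₗ (LinearMap.range (LinearMap.lcomp R A u)).mkQ =
      (LinearMap.range (LinearMap.lcomp R B u)).mkQ ∘ₗ LinearMap.llcomp (σ₁₂ := RingHom.id R) R X A B f)
    (Ψ₂ : ((X →ₗ[R] B) ⧸ LinearMap.range (LinearMap.lcomp R B u)) →ₗ[R]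
          ((X →ₗ[R] C) ⧸ LinearMap.range (LinearMap.lcomp R C u)))
    (hΨ₂ : Ψ₂ ∘ₗ (LinearMap.range (LinearMap.lcomp R B u)).mkQ =
      (LinearMap.range (LinearMap.lcomp R C u)).mkQ ∘ₗ LinearMap.llcomp (σ₁₂ := RingHom.id R) R X B C g) :
    Nonempty (↥(LinearMap.ker Φ₁) ≃ₗ[R] ↥(LinearMap.ker Ψ₁)) ∧
    Nonempty (
      (↥(LinearMap.ker Φ₂) ⧸
        (LinearMap.range Φ₁).comap (LinearMap.ker Φ₂).subtype)
      ≃ₗ[R]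
      (↥(LinearMap.ker Ψ₂) ⧸
        (LinearMap.range Ψ₁).comap (LinearMap.ker Ψ₂).subtype)) ∧
    Nonempty (
      (((X →ₗ[R] C) ⧸ LinearMap.range (LinearMap.llcomp (σ₁₂ := RingHom.id R) R X B C g)) ⧸
        LinearMap.range Φ₂)
      ≃ₗ[R]
      (((X →ₗ[R] C) ⧸ LinearMap.range (LinearMap.lcomp R C u)) ⧸
        LinearMap.range Ψ₂)) :=
  hom_cokernel_complexes_general f g hf hfg u v hv huv Φ₁ hΦ₁ Φ₂ hΦ₂ Ψ₁ hΨ₁ Ψ₂ hΨ₂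
end

section
/- In the Γ-shaped diagram of R-modules (with modules B₀,C₀,D₀; A₁,B₁,C₁,D₁; K₂,A₂,B₂,C₂; K₃,A₃,B₃; K₄,A₄; horizontal maps g₀,h₀; f₁,g₁,h₁; e₂,f₂,g₂; e₃,f₃; e₄; vertical maps β₀,γ₀,δ₀; α₁,β₁,γ₁; κ₂,α₂,β₂; κ₃,α₃) with all indicated squares commuting, the rows and columns exact at B₁, A₂ and at C₁, B₂, A₃, and γ₀, δ₀, e₃, e₄ injective, the quotient Ker h₀ / Im g₀ is isomorphic as an R-module to Ker κ₃ / Im κ₂. -/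
/-!
The diagram is symmetric under transposition, which exchanges rows and columns, `C₀` with `K₃`,
`g₀` with `κ₂` and `h₀` with `κ₃`. The isomorphism is induced by the self-dual zigzag relation:
`c ~ k` iff `γ₀ c = g₁ b`, `β₁ b = f₂ a` and `α₂ a = e₃ k` for some `b`, `a`. A diagram chase
shows that the elements of `C₀` related to something are exactly those of `Ker h₀`, and that if
`c ~ k` with `c ∈ Im g₀` then `k ∈ Im κ₂`; by symmetry the elements of `K₃` related to something
are exactly those of `Ker κ₃`, and `k ∈ Im κ₂` forces `c ∈ Im g₀`. Finally, a submodule `S` of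
`M × N` with projections `P`, `Q` induces `P / P' ≃ Q / Q'` as soon as `x.1 ∈ P' ↔ x.2 ∈ Q'` on
`S`, since both projections `S → P / P'` and `S → Q / Q'` are then surjective with equal kernels.
-/

open LinearMap

namespace Submodule

variable {R M N : Type*} [Ring R] [AddCommGroup M] [Module R M] [AddCommGroup N] [Module R N]

noncomputable def quotEquivOfRelation (S : Submodule R (M × N)) {P P' : Submodule R M}
    {Q Q' : Submodule R N} (hP : S.map (LinearMap.fst R M N) = P)
    (hQ : S.map (LinearMap.snd R M N) = Q)
    (hPQ : ∀ x ∈ S, x.1 ∈ P' ↔ x.2 ∈ Q') :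
    (P ⧸ P'.comap P.subtype) ≃ₗ[R] (Q ⧸ Q'.comap Q.subtype) := by
  subst hP hQ
  let π₁ := (P'.comap (S.map _).subtype).mkQ ∘ₗ (LinearMap.fst R M N).submoduleMap S
  let π₂ := (Q'.comap (S.map _).subtype).mkQ ∘ₗ (LinearMap.snd R M N).submoduleMap S
  have hπ₁ : Function.Surjective π₁ := (mkQ_surjective _).comp (submoduleMap_surjective _ _)
  have hπ₂ : Function.Surjective π₂ := (mkQ_surjective _).comp (submoduleMap_surjective _ _)
  have hker : ker π₁ = ker π₂ := by
    ext x
    simpa [π₁, π₂] using hPQ x x.2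
  exact (π₁.quotKerEquivOfSurjective hπ₁).symm ≪≫ₗ quotEquivOfEq _ _ hker ≪≫ₗ
    π₂.quotKerEquivOfSurjective hπ₂

end Submodule

section Zigzag

variable {R : Type*} [Ring R] {B₀ C₀ D₀ A₁ B₁ C₁ D₁ K₂ A₂ B₂ C₂ K₃ A₃ B₃ : Type*}
  [AddCommGroup B₀] [Module R B₀] [AddCommGroup C₀] [Module R C₀]
  [AddCommGroup D₀] [Module R D₀] [AddCommGroup A₁] [Module R A₁]
  [AddCommGroup B₁] [Module R B₁] [AddCommGroup C₁] [Module R C₁]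
  [AddCommGroup D₁] [Module R D₁] [AddCommGroup K₂] [Module R K₂]
  [AddCommGroup A₂] [Module R A₂] [AddCommGroup B₂] [Module R B₂]
  [AddCommGroup C₂] [Module R C₂] [AddCommGroup K₃] [Module R K₃]
  [AddCommGroup A₃] [Module R A₃] [AddCommGroup B₃] [Module R B₃]

def zigzagRel (γ₀ : C₀ →ₗ[R] C₁) (g₁ : B₁ →ₗ[R] C₁) (β₁ : B₁ →ₗ[R] B₂) (f₂ : A₂ →ₗ[R] B₂)
    (α₂ : A₂ →ₗ[R] A₃) (e₃ : K₃ →ₗ[R] A₃) : Submodule R (C₀ × K₃) where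
  carrier := {x | ∃ b a, g₁ b = γ₀ x.1 ∧ f₂ a = β₁ b ∧ e₃ x.2 = α₂ a}
  add_mem' := by
    rintro x y ⟨b, a, hb, ha, hk⟩ ⟨b', a', hb', ha', hk'⟩
    exact ⟨b + b', a + a', by simp [*]⟩
  zero_mem' := ⟨0, 0, by simp⟩
  smul_mem' := by
    rintro r x ⟨b, a, hb, ha, hk⟩
    exact ⟨r • b, r • a, by simp [*]⟩

variable {γ₀ : C₀ →ₗ[R] C₁} {g₁ : B₁ →ₗ[R] C₁} {β₁ : B₁ →ₗ[R] B₂} {f₂ : A₂ →ₗ[R] B₂}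
  {α₂ : A₂ →ₗ[R] A₃} {e₃ : K₃ →ₗ[R] A₃}

theorem mem_zigzagRel_swap {x : C₀ × K₃} :
    x.swap ∈ zigzagRel e₃ α₂ f₂ β₁ g₁ γ₀ ↔ x ∈ zigzagRel γ₀ g₁ β₁ f₂ α₂ e₃ :=
  ⟨fun ⟨a, b, ha, hb, hc⟩ ↦ ⟨b, a, hc.symm, hb.symm, ha.symm⟩,
    fun ⟨b, a, hb, ha, hk⟩ ↦ ⟨a, b, hk.symm, ha.symm, hb.symm⟩⟩

theorem map_snd_zigzagRel :
    (zigzagRel γ₀ g₁ β₁ f₂ α₂ e₃).map (snd R C₀ K₃) =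
      (zigzagRel e₃ α₂ f₂ β₁ g₁ γ₀).map (fst R K₃ C₀) := by
  ext k
  constructor
  · rintro ⟨x, hx, rfl⟩
    exact ⟨x.swap, mem_zigzagRel_swap.2 hx, rfl⟩
  · rintro ⟨y, hy, rfl⟩
    exact ⟨y.swap, mem_zigzagRel_swap.1 hy, rfl⟩

theorem map_fst_zigzagRel {h₀ : C₀ →ₗ[R] D₀} {h₁ : C₁ →ₗ[R] D₁} {δ₀ : D₀ →ₗ[R] D₁}
    {γ₁ : C₁ →ₗ[R] C₂} {g₂ : B₂ →ₗ[R] C₂} {β₂ : B₂ →ₗ[R] B₃} {f₃ : A₃ →ₗ[R] B₃}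
    (hsq₂ : h₁ ∘ₗ γ₀ = δ₀ ∘ₗ h₀) (hsq₄ : g₂ ∘ₗ β₁ = γ₁ ∘ₗ g₁) (hsq₆ : f₃ ∘ₗ α₂ = β₂ ∘ₗ f₂)
    (hC₁ : range g₁ = ker h₁) (hγ₀ : range γ₀ ≤ ker γ₁) (hB₂ : ker g₂ ≤ range f₂)
    (hβ₁ : range β₁ ≤ ker β₂) (hA₃ : ker f₃ ≤ range e₃) (hδ₀ : Function.Injective δ₀) :
    (zigzagRel γ₀ g₁ β₁ f₂ α₂ e₃).map (fst R C₀ K₃) = ker h₀ := by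
  ext c
  constructor
  · rintro ⟨⟨c, k⟩, ⟨b, a, hb, -, -⟩, rfl⟩
    apply hδ₀
    rw [map_zero, fst_apply, ← comp_apply δ₀ h₀, ← hsq₂, comp_apply, ← hb]
    exact hC₁.le (mem_range_self g₁ b)
  · intro hc
    obtain ⟨b, hb⟩ : γ₀ c ∈ range g₁ := by
      rw [hC₁, mem_ker, ← comp_apply h₁ γ₀, hsq₂, comp_apply, mem_ker.1 hc, map_zero]
    obtain ⟨a, ha⟩ : β₁ b ∈ range f₂ := by
      apply hB₂
      rw [mem_ker, ← comp_apply g₂ β₁, hsq₄, comp_apply, hb]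
      exact hγ₀ (mem_range_self γ₀ c)
    obtain ⟨k, hk⟩ : α₂ a ∈ range e₃ := by
      apply hA₃
      rw [mem_ker, ← comp_apply f₃ α₂, hsq₆, comp_apply, ha]
      exact hβ₁ (mem_range_self β₁ b)
    exact ⟨(c, k), ⟨b, a, hb, ha, hk⟩, rfl⟩

theorem snd_mem_range_of_fst_mem_range {g₀ : B₀ →ₗ[R] C₀} {β₀ : B₀ →ₗ[R] B₁}
    {f₁ : A₁ →ₗ[R] B₁} {α₁ : A₁ →ₗ[R] A₂} {e₂ : K₂ →ₗ[R] A₂} {κ₂ : K₂ →ₗ[R] K₃}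
    (hsq₁ : g₁ ∘ₗ β₀ = γ₀ ∘ₗ g₀) (hsq₃ : f₂ ∘ₗ α₁ = β₁ ∘ₗ f₁) (hsq₅ : e₃ ∘ₗ κ₂ = α₂ ∘ₗ e₂)
    (hβ₀ : range β₀ ≤ ker β₁) (hB₁ : ker g₁ ≤ range f₁) (hA₂ : ker f₂ ≤ range e₂)
    (hα₁ : range α₁ ≤ ker α₂) (he₃ : Function.Injective e₃) {x : C₀ × K₃}
    (hx : x ∈ zigzagRel γ₀ g₁ β₁ f₂ α₂ e₃) (hx₁ : x.1 ∈ range g₀) : x.2 ∈ range κ₂ := by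
  obtain ⟨b, a, hb, ha, hk⟩ := hx
  obtain ⟨b₀, hb₀⟩ := hx₁
  obtain ⟨a₁, ha₁⟩ : b - β₀ b₀ ∈ range f₁ := by
    apply hB₁
    rw [mem_ker, map_sub, ← comp_apply g₁ β₀, hsq₁, comp_apply, hb₀, hb, sub_self]
  obtain ⟨k₂, hk₂⟩ : a - α₁ a₁ ∈ range e₂ := by
    apply hA₂
    rw [mem_ker, map_sub, ← comp_apply f₂ α₁, hsq₃, comp_apply, ha₁, ha, map_sub,
      mem_ker.1 (hβ₀ (mem_range_self β₀ b₀)), sub_zero, sub_self]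
  refine ⟨k₂, he₃ ?_⟩
  rw [← comp_apply e₃ κ₂, hsq₅, comp_apply, hk₂, map_sub, mem_ker.1 (hα₁ (mem_range_self α₁ a₁)),
    sub_zero, hk]

end Zigzag

/-- In the Γ-shaped diagram with rows `B₀ → C₀ → D₀`, `A₁ → B₁ → C₁ → D₁`,
`K₂ → A₂ → B₂ → C₂`, `K₃ → A₃ → B₃`, `K₄ → A₄`, commuting squares, rows and
columns exact at `B₁`, `A₂`, `C₁`, `B₂`, `A₃`, and `γ₀`, `δ₀`, `e₃`, `e₄`
injective, one has `Ker h₀ / Im g₀ ≅ Ker κ₃ / Im κ₂`. -/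
theorem gamma_homology_iso {R : Type*} [Ring R]
    {B₀ C₀ D₀ A₁ B₁ C₁ D₁ K₂ A₂ B₂ C₂ K₃ A₃ B₃ K₄ A₄ : Type*}
    [AddCommGroup B₀] [Module R B₀] [AddCommGroup C₀] [Module R C₀]
    [AddCommGroup D₀] [Module R D₀] [AddCommGroup A₁] [Module R A₁]
    [AddCommGroup B₁] [Module R B₁] [AddCommGroup C₁] [Module R C₁]
    [AddCommGroup D₁] [Module R D₁] [AddCommGroup K₂] [Module R K₂]
    [AddCommGroup A₂] [Module R A₂] [AddCommGroup B₂] [Module R B₂]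
    [AddCommGroup C₂] [Module R C₂] [AddCommGroup K₃] [Module R K₃]
    [AddCommGroup A₃] [Module R A₃] [AddCommGroup B₃] [Module R B₃]
    [AddCommGroup K₄] [Module R K₄] [AddCommGroup A₄] [Module R A₄]
    (g₀ : B₀ →ₗ[R] C₀) (h₀ : C₀ →ₗ[R] D₀)
    (f₁ : A₁ →ₗ[R] B₁) (g₁ : B₁ →ₗ[R] C₁) (h₁ : C₁ →ₗ[R] D₁)
    (e₂ : K₂ →ₗ[R] A₂) (f₂ : A₂ →ₗ[R] B₂) (g₂ : B₂ →ₗ[R] C₂)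
    (e₃ : K₃ →ₗ[R] A₃) (f₃ : A₃ →ₗ[R] B₃)
    (e₄ : K₄ →ₗ[R] A₄)
    (β₀ : B₀ →ₗ[R] B₁) (γ₀ : C₀ →ₗ[R] C₁) (δ₀ : D₀ →ₗ[R] D₁)
    (α₁ : A₁ →ₗ[R] A₂) (β₁ : B₁ →ₗ[R] B₂) (γ₁ : C₁ →ₗ[R] C₂)
    (κ₂ : K₂ →ₗ[R] K₃) (α₂ : A₂ →ₗ[R] A₃) (β₂ : B₂ →ₗ[R] B₃)
    (κ₃ : K₃ →ₗ[R] K₄) (α₃ : A₃ →ₗ[R] A₄)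
    (hsq₁ : g₁ ∘ₗ β₀ = γ₀ ∘ₗ g₀)
    (hsq₂ : h₁ ∘ₗ γ₀ = δ₀ ∘ₗ h₀)
    (hsq₃ : f₂ ∘ₗ α₁ = β₁ ∘ₗ f₁)
    (hsq₄ : g₂ ∘ₗ β₁ = γ₁ ∘ₗ g₁)
    (hsq₅ : e₃ ∘ₗ κ₂ = α₂ ∘ₗ e₂)
    (hsq₆ : f₃ ∘ₗ α₂ = β₂ ∘ₗ f₂)
    (hsq₇ : e₄ ∘ₗ κ₃ = α₃ ∘ₗ e₃)
    (hrowB₁ : LinearMap.range f₁ = LinearMap.ker g₁)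
    (hcolB₁ : LinearMap.range β₀ = LinearMap.ker β₁)
    (hrowA₂ : LinearMap.range e₂ = LinearMap.ker f₂)
    (hcolA₂ : LinearMap.range α₁ = LinearMap.ker α₂)
    (hrowC₁ : LinearMap.range g₁ = LinearMap.ker h₁)
    (hcolC₁ : LinearMap.range γ₀ = LinearMap.ker γ₁)
    (hrowB₂ : LinearMap.range f₂ = LinearMap.ker g₂)
    (hcolB₂ : LinearMap.range β₁ = LinearMap.ker β₂)
    (hrowA₃ : LinearMap.range e₃ = LinearMap.ker f₃)
    (hcolA₃ : LinearMap.range α₂ = LinearMap.ker α₃)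
    (hγ₀ : Function.Injective γ₀) (hδ₀ : Function.Injective δ₀)
    (he₃ : Function.Injective e₃) (he₄ : Function.Injective e₄) :
    Nonempty (
      (↥(LinearMap.ker h₀) ⧸
        (LinearMap.range g₀).comap (LinearMap.ker h₀).subtype)
      ≃ₗ[R]
      (↥(LinearMap.ker κ₃) ⧸
        (LinearMap.range κ₂).comap (LinearMap.ker κ₃).subtype)) := by
  have hP : (zigzagRel γ₀ g₁ β₁ f₂ α₂ e₃).map (fst R C₀ K₃) = ker h₀ :=
    map_fst_zigzagRel hsq₂ hsq₄ hsq₆ hrowC₁ hcolC₁.le hrowB₂.ge hcolB₂.le hrowA₃.ge hδ₀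
  have hQ : (zigzagRel γ₀ g₁ β₁ f₂ α₂ e₃).map (snd R C₀ K₃) = ker κ₃ := by
    rw [map_snd_zigzagRel]
    -- the chase of `hP`, in the transposed diagram
    exact map_fst_zigzagRel hsq₇.symm hsq₆.symm hsq₄.symm hcolA₃ hrowA₃.le hcolB₂.ge hrowB₂.le
      hcolC₁.ge he₄
  refine ⟨Submodule.quotEquivOfRelation _ hP hQ fun x hx ↦ ⟨?_, fun hk ↦ ?_⟩⟩
  · exact snd_mem_range_of_fst_mem_range hsq₁ hsq₃ hsq₅ hcolB₁.le hrowB₁.ge hrowA₂.ge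
      hcolA₂.le he₃ hx
  · exact snd_mem_range_of_fst_mem_range (x := x.swap) hsq₅.symm hsq₃.symm hsq₁.symm hrowA₂.le
      hcolA₂.ge hcolB₁.ge hrowB₁.le hγ₀ (mem_zigzagRel_swap.2 hx) hk
end

section
/- In the Γ-shaped diagram of R-modules (with modules B₀,C₀,D₀; A₁,B₁,C₁,D₁; K₂,A₂,B₂,C₂; K₃,A₃,B₃; K₄,A₄ and maps as indicated), with all indicated squares commuting, the rows and columns exact at C₁, B₂, A₃, and δ₀ and e₄ injective, for every c₀ ∈ C₀ with h₀(c₀) = 0 there exist z₃ ∈ K₃ with κ₃(z₃) = 0 and elements b₁ ∈ B₁, a₂ ∈ A₂ witnessing (z₃, c₀) ∈ u, i.e., g₁(b₁) = γ₀(c₀), f₂(a₂) = β₁(b₁), and e₃(z₃) = α₂(a₂). -/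
/-- In the Γ-shaped diagram with commuting squares, rows and columns exact at
`C₁`, `B₂`, `A₃`, and `δ₀`, `e₄` injective: for every `c₀ ∈ C₀` with
`h₀ c₀ = 0` there is `z₃ ∈ Ker κ₃` with `(z₃, c₀)` in the relation
`u = e₃⁻¹ ∘ α₂ ∘ f₂⁻¹ ∘ β₁ ∘ g₁⁻¹ ∘ γ₀`, witnessed by `b₁ ∈ B₁`, `a₂ ∈ A₂`. -/
theorem gamma_ker_h₀_lifts {R : Type*} [Ring R]
    {B₀ C₀ D₀ A₁ B₁ C₁ D₁ K₂ A₂ B₂ C₂ K₃ A₃ B₃ K₄ A₄ : Type*}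
    [AddCommGroup B₀] [Module R B₀] [AddCommGroup C₀] [Module R C₀]
    [AddCommGroup D₀] [Module R D₀] [AddCommGroup A₁] [Module R A₁]
    [AddCommGroup B₁] [Module R B₁] [AddCommGroup C₁] [Module R C₁]
    [AddCommGroup D₁] [Module R D₁] [AddCommGroup K₂] [Module R K₂]
    [AddCommGroup A₂] [Module R A₂] [AddCommGroup B₂] [Module R B₂]
    [AddCommGroup C₂] [Module R C₂] [AddCommGroup K₃] [Module R K₃]
    [AddCommGroup A₃] [Module R A₃] [AddCommGroup B₃] [Module R B₃]
    [AddCommGroup K₄] [Module R K₄] [AddCommGroup A₄] [Module R A₄]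
    (g₀ : B₀ →ₗ[R] C₀) (h₀ : C₀ →ₗ[R] D₀)
    (f₁ : A₁ →ₗ[R] B₁) (g₁ : B₁ →ₗ[R] C₁) (h₁ : C₁ →ₗ[R] D₁)
    (e₂ : K₂ →ₗ[R] A₂) (f₂ : A₂ →ₗ[R] B₂) (g₂ : B₂ →ₗ[R] C₂)
    (e₃ : K₃ →ₗ[R] A₃) (f₃ : A₃ →ₗ[R] B₃)
    (e₄ : K₄ →ₗ[R] A₄)
    (β₀ : B₀ →ₗ[R] B₁) (γ₀ : C₀ →ₗ[R] C₁) (δ₀ : D₀ →ₗ[R] D₁)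
    (α₁ : A₁ →ₗ[R] A₂) (β₁ : B₁ →ₗ[R] B₂) (γ₁ : C₁ →ₗ[R] C₂)
    (κ₂ : K₂ →ₗ[R] K₃) (α₂ : A₂ →ₗ[R] A₃) (β₂ : B₂ →ₗ[R] B₃)
    (κ₃ : K₃ →ₗ[R] K₄) (α₃ : A₃ →ₗ[R] A₄)
    (hsq₁ : g₁ ∘ₗ β₀ = γ₀ ∘ₗ g₀)
    (hsq₂ : h₁ ∘ₗ γ₀ = δ₀ ∘ₗ h₀)
    (hsq₃ : f₂ ∘ₗ α₁ = β₁ ∘ₗ f₁)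
    (hsq₄ : g₂ ∘ₗ β₁ = γ₁ ∘ₗ g₁)
    (hsq₅ : e₃ ∘ₗ κ₂ = α₂ ∘ₗ e₂)
    (hsq₆ : f₃ ∘ₗ α₂ = β₂ ∘ₗ f₂)
    (hsq₇ : e₄ ∘ₗ κ₃ = α₃ ∘ₗ e₃)
    (hrowC₁ : LinearMap.range g₁ = LinearMap.ker h₁)
    (hcolC₁ : LinearMap.range γ₀ = LinearMap.ker γ₁)
    (hrowB₂ : LinearMap.range f₂ = LinearMap.ker g₂)
    (hcolB₂ : LinearMap.range β₁ = LinearMap.ker β₂)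
    (hrowA₃ : LinearMap.range e₃ = LinearMap.ker f₃)
    (hcolA₃ : LinearMap.range α₂ = LinearMap.ker α₃)
    (hδ₀ : Function.Injective δ₀) (he₄ : Function.Injective e₄) :
    ∀ c₀ : C₀, h₀ c₀ = 0 →
      ∃ (z₃ : K₃) (b₁ : B₁) (a₂ : A₂),
        κ₃ z₃ = 0 ∧ g₁ b₁ = γ₀ c₀ ∧ f₂ a₂ = β₁ b₁ ∧ e₃ z₃ = α₂ a₂ := by
  intro c₀ hc₀
  have h1 : h₁ (γ₀ c₀) = 0 := by
    have := congrArg (fun f => f c₀) hsq₂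
    simp only [LinearMap.comp_apply] at this
    rw [this, hc₀, map_zero]
  obtain ⟨b₁, hb₁⟩ : γ₀ c₀ ∈ LinearMap.range g₁ := by
    rw [hrowC₁]; exact h1
  have h2 : g₂ (β₁ b₁) = 0 := by
    have hs := congrArg (fun f => f b₁) hsq₄
    simp only [LinearMap.comp_apply] at hs
    rw [hs, hb₁]
    have : γ₀ c₀ ∈ LinearMap.ker γ₁ := by rw [← hcolC₁]; exact ⟨c₀, rfl⟩
    exact this
  obtain ⟨a₂, ha₂⟩ : β₁ b₁ ∈ LinearMap.range f₂ := by
    rw [hrowB₂]; exact h2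
  have h3 : f₃ (α₂ a₂) = 0 := by
    have hs := congrArg (fun f => f a₂) hsq₆
    simp only [LinearMap.comp_apply] at hs
    rw [hs, ha₂]
    have : β₁ b₁ ∈ LinearMap.ker β₂ := by rw [← hcolB₂]; exact ⟨b₁, rfl⟩
    exact this
  obtain ⟨z₃, hz₃⟩ : α₂ a₂ ∈ LinearMap.range e₃ := by
    rw [hrowA₃]; exact h3
  refine ⟨z₃, b₁, a₂, ?_, hb₁, ha₂, hz₃⟩
  apply he₄
  have hs := congrArg (fun f => f z₃) hsq₇
  simp only [LinearMap.comp_apply] at hs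
  rw [hs, hz₃, map_zero]
  have : α₂ a₂ ∈ LinearMap.ker α₃ := by rw [← hcolA₃]; exact ⟨a₂, rfl⟩
  exact this
end

section
/- In the Γ-shaped diagram of R-modules (with modules B₀,C₀,D₀; A₁,B₁,C₁,D₁; K₂,A₂,B₂,C₂; K₃,A₃,B₃; K₄,A₄ and maps as indicated), with all indicated squares commuting, the rows and columns exact at C₁, B₂, A₃, and δ₀ and e₄ injective, for every z₃ ∈ K₃ with κ₃(z₃) = 0 there exist c₀ ∈ C₀ with h₀(c₀) = 0 and elements b₁ ∈ B₁, a₂ ∈ A₂ witnessing (z₃, c₀) ∈ u, i.e., g₁(b₁) = γ₀(c₀), f₂(a₂) = β₁(b₁), and e₃(z₃) = α₂(a₂). -/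
/-- In the Γ-shaped diagram with commuting squares, rows and columns exact at
`C₁`, `B₂`, `A₃`, and `δ₀`, `e₄` injective: for every `z₃ ∈ K₃` with
`κ₃ z₃ = 0` there is `c₀ ∈ Ker h₀` with `(z₃, c₀)` in the relation
`u = e₃⁻¹ ∘ α₂ ∘ f₂⁻¹ ∘ β₁ ∘ g₁⁻¹ ∘ γ₀`, witnessed by `b₁ ∈ B₁`, `a₂ ∈ A₂`. -/
theorem gamma_ker_κ₃_lifts {R : Type*} [Ring R]
    {B₀ C₀ D₀ A₁ B₁ C₁ D₁ K₂ A₂ B₂ C₂ K₃ A₃ B₃ K₄ A₄ : Type*}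
    [AddCommGroup B₀] [Module R B₀] [AddCommGroup C₀] [Module R C₀]
    [AddCommGroup D₀] [Module R D₀] [AddCommGroup A₁] [Module R A₁]
    [AddCommGroup B₁] [Module R B₁] [AddCommGroup C₁] [Module R C₁]
    [AddCommGroup D₁] [Module R D₁] [AddCommGroup K₂] [Module R K₂]
    [AddCommGroup A₂] [Module R A₂] [AddCommGroup B₂] [Module R B₂]
    [AddCommGroup C₂] [Module R C₂] [AddCommGroup K₃] [Module R K₃]
    [AddCommGroup A₃] [Module R A₃] [AddCommGroup B₃] [Module R B₃]
    [AddCommGroup K₄] [Module R K₄] [AddCommGroup A₄] [Module R A₄]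
    (g₀ : B₀ →ₗ[R] C₀) (h₀ : C₀ →ₗ[R] D₀)
    (f₁ : A₁ →ₗ[R] B₁) (g₁ : B₁ →ₗ[R] C₁) (h₁ : C₁ →ₗ[R] D₁)
    (e₂ : K₂ →ₗ[R] A₂) (f₂ : A₂ →ₗ[R] B₂) (g₂ : B₂ →ₗ[R] C₂)
    (e₃ : K₃ →ₗ[R] A₃) (f₃ : A₃ →ₗ[R] B₃)
    (e₄ : K₄ →ₗ[R] A₄)
    (β₀ : B₀ →ₗ[R] B₁) (γ₀ : C₀ →ₗ[R] C₁) (δ₀ : D₀ →ₗ[R] D₁)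
    (α₁ : A₁ →ₗ[R] A₂) (β₁ : B₁ →ₗ[R] B₂) (γ₁ : C₁ →ₗ[R] C₂)
    (κ₂ : K₂ →ₗ[R] K₃) (α₂ : A₂ →ₗ[R] A₃) (β₂ : B₂ →ₗ[R] B₃)
    (κ₃ : K₃ →ₗ[R] K₄) (α₃ : A₃ →ₗ[R] A₄)
    (hsq₁ : g₁ ∘ₗ β₀ = γ₀ ∘ₗ g₀)
    (hsq₂ : h₁ ∘ₗ γ₀ = δ₀ ∘ₗ h₀)
    (hsq₃ : f₂ ∘ₗ α₁ = β₁ ∘ₗ f₁)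
    (hsq₄ : g₂ ∘ₗ β₁ = γ₁ ∘ₗ g₁)
    (hsq₅ : e₃ ∘ₗ κ₂ = α₂ ∘ₗ e₂)
    (hsq₆ : f₃ ∘ₗ α₂ = β₂ ∘ₗ f₂)
    (hsq₇ : e₄ ∘ₗ κ₃ = α₃ ∘ₗ e₃)
    (hrowC₁ : LinearMap.range g₁ = LinearMap.ker h₁)
    (hcolC₁ : LinearMap.range γ₀ = LinearMap.ker γ₁)
    (hrowB₂ : LinearMap.range f₂ = LinearMap.ker g₂)
    (hcolB₂ : LinearMap.range β₁ = LinearMap.ker β₂)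
    (hrowA₃ : LinearMap.range e₃ = LinearMap.ker f₃)
    (hcolA₃ : LinearMap.range α₂ = LinearMap.ker α₃)
    (hδ₀ : Function.Injective δ₀) (he₄ : Function.Injective e₄) :
    ∀ z₃ : K₃, κ₃ z₃ = 0 →
      ∃ (c₀ : C₀) (b₁ : B₁) (a₂ : A₂),
        h₀ c₀ = 0 ∧ g₁ b₁ = γ₀ c₀ ∧ f₂ a₂ = β₁ b₁ ∧ e₃ z₃ = α₂ a₂ := by
  intro z₃ hz
  have h1 : α₃ (e₃ z₃) = 0 := by
    have := congrArg (fun f => f z₃) hsq₇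
    simp only [LinearMap.comp_apply] at this
    rw [← this, hz, map_zero]
  obtain ⟨a₂, ha₂⟩ : e₃ z₃ ∈ LinearMap.range α₂ := by
    rw [hcolA₃]; exact h1
  have h2 : β₂ (f₂ a₂) = 0 := by
    have := congrArg (fun f => f a₂) hsq₆
    simp only [LinearMap.comp_apply] at this
    rw [← this, ha₂]
    have : e₃ z₃ ∈ LinearMap.ker f₃ := by
      rw [← hrowA₃]; exact ⟨z₃, rfl⟩
    simpa using this
  obtain ⟨b₁, hb₁⟩ : f₂ a₂ ∈ LinearMap.range β₁ := by
    rw [hcolB₂]; exact h2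
  have h3 : γ₁ (g₁ b₁) = 0 := by
    have := congrArg (fun f => f b₁) hsq₄
    simp only [LinearMap.comp_apply] at this
    rw [← this, hb₁]
    have : f₂ a₂ ∈ LinearMap.ker g₂ := by
      rw [← hrowB₂]; exact ⟨a₂, rfl⟩
    simpa using this
  obtain ⟨c₀, hc₀⟩ : g₁ b₁ ∈ LinearMap.range γ₀ := by
    rw [hcolC₁]; exact h3
  have h4 : δ₀ (h₀ c₀) = 0 := by
    have := congrArg (fun f => f c₀) hsq₂
    simp only [LinearMap.comp_apply] at this
    rw [← this, hc₀]
    have : g₁ b₁ ∈ LinearMap.ker h₁ := by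
      rw [← hrowC₁]; exact ⟨b₁, rfl⟩
    simpa using this
  have hc : h₀ c₀ = 0 := by
    apply hδ₀; rw [h4, map_zero]
  exact ⟨c₀, b₁, a₂, hc, hc₀.symm, hb₁.symm, ha₂.symm⟩
end

section
/- In the Γ-shaped diagram of R-modules (with modules B₀,C₀,D₀; A₁,B₁,C₁,D₁; K₂,A₂,B₂,C₂; K₃,A₃,B₃; K₄,A₄ and maps as indicated), with all indicated squares commuting, the rows and columns exact at B₁ and A₂, and γ₀ and e₃ injective, whenever a pair (z₃, c₀) lies in the relation u — i.e., there exist b₁ ∈ B₁ and a₂ ∈ A₂ with g₁(b₁) = γ₀(c₀), f₂(a₂) = β₁(b₁), and e₃(z₃) = α₂(a₂) — then c₀ ∈ Im g₀ if and only if z₃ ∈ Im κ₂. -/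
/-- In the Γ-shaped diagram with commuting squares, rows and columns exact at
`B₁` and `A₂`, and `γ₀`, `e₃` injective: whenever `(z₃, c₀)` lies in the
relation `u = e₃⁻¹ ∘ α₂ ∘ f₂⁻¹ ∘ β₁ ∘ g₁⁻¹ ∘ γ₀` (witnessed by `b₁ ∈ B₁` and
`a₂ ∈ A₂`), then `c₀ ∈ Im g₀` if and only if `z₃ ∈ Im κ₂`. -/
theorem gamma_image_iff {R : Type*} [Ring R]
    {B₀ C₀ D₀ A₁ B₁ C₁ D₁ K₂ A₂ B₂ C₂ K₃ A₃ B₃ K₄ A₄ : Type*}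
    [AddCommGroup B₀] [Module R B₀] [AddCommGroup C₀] [Module R C₀]
    [AddCommGroup D₀] [Module R D₀] [AddCommGroup A₁] [Module R A₁]
    [AddCommGroup B₁] [Module R B₁] [AddCommGroup C₁] [Module R C₁]
    [AddCommGroup D₁] [Module R D₁] [AddCommGroup K₂] [Module R K₂]
    [AddCommGroup A₂] [Module R A₂] [AddCommGroup B₂] [Module R B₂]
    [AddCommGroup C₂] [Module R C₂] [AddCommGroup K₃] [Module R K₃]
    [AddCommGroup A₃] [Module R A₃] [AddCommGroup B₃] [Module R B₃]
    [AddCommGroup K₄] [Module R K₄] [AddCommGroup A₄] [Module R A₄]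
    (g₀ : B₀ →ₗ[R] C₀) (h₀ : C₀ →ₗ[R] D₀)
    (f₁ : A₁ →ₗ[R] B₁) (g₁ : B₁ →ₗ[R] C₁) (h₁ : C₁ →ₗ[R] D₁)
    (e₂ : K₂ →ₗ[R] A₂) (f₂ : A₂ →ₗ[R] B₂) (g₂ : B₂ →ₗ[R] C₂)
    (e₃ : K₃ →ₗ[R] A₃) (f₃ : A₃ →ₗ[R] B₃)
    (e₄ : K₄ →ₗ[R] A₄)
    (β₀ : B₀ →ₗ[R] B₁) (γ₀ : C₀ →ₗ[R] C₁) (δ₀ : D₀ →ₗ[R] D₁)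
    (α₁ : A₁ →ₗ[R] A₂) (β₁ : B₁ →ₗ[R] B₂) (γ₁ : C₁ →ₗ[R] C₂)
    (κ₂ : K₂ →ₗ[R] K₃) (α₂ : A₂ →ₗ[R] A₃) (β₂ : B₂ →ₗ[R] B₃)
    (κ₃ : K₃ →ₗ[R] K₄) (α₃ : A₃ →ₗ[R] A₄)
    (hsq₁ : g₁ ∘ₗ β₀ = γ₀ ∘ₗ g₀)
    (hsq₂ : h₁ ∘ₗ γ₀ = δ₀ ∘ₗ h₀)
    (hsq₃ : f₂ ∘ₗ α₁ = β₁ ∘ₗ f₁)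
    (hsq₄ : g₂ ∘ₗ β₁ = γ₁ ∘ₗ g₁)
    (hsq₅ : e₃ ∘ₗ κ₂ = α₂ ∘ₗ e₂)
    (hsq₆ : f₃ ∘ₗ α₂ = β₂ ∘ₗ f₂)
    (hsq₇ : e₄ ∘ₗ κ₃ = α₃ ∘ₗ e₃)
    (hrowB₁ : LinearMap.range f₁ = LinearMap.ker g₁)
    (hcolB₁ : LinearMap.range β₀ = LinearMap.ker β₁)
    (hrowA₂ : LinearMap.range e₂ = LinearMap.ker f₂)
    (hcolA₂ : LinearMap.range α₁ = LinearMap.ker α₂)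
    (hγ₀ : Function.Injective γ₀) (he₃ : Function.Injective e₃) :
    ∀ (z₃ : K₃) (c₀ : C₀) (b₁ : B₁) (a₂ : A₂),
      g₁ b₁ = γ₀ c₀ → f₂ a₂ = β₁ b₁ → e₃ z₃ = α₂ a₂ →
      (c₀ ∈ LinearMap.range g₀ ↔ z₃ ∈ LinearMap.range κ₂) := by

  intro z₃ c₀ b₁ a₂ h1 h2 h3
  have sq1 : ∀ b, g₁ (β₀ b) = γ₀ (g₀ b) := fun b => congrFun (congrArg (·.toFun) hsq₁) b
  have sq3 : ∀ a, f₂ (α₁ a) = β₁ (f₁ a) := fun a => congrFun (congrArg (·.toFun) hsq₃) a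
  have sq5 : ∀ k, e₃ (κ₂ k) = α₂ (e₂ k) := fun k => congrFun (congrArg (·.toFun) hsq₅) k
  constructor
  · rintro ⟨b₀, rfl⟩
    have hk : b₁ - β₀ b₀ ∈ LinearMap.ker g₁ := by
      simp [LinearMap.mem_ker, h1, sq1]
    rw [← hrowB₁] at hk
    obtain ⟨a₁, ha₁⟩ := hk
    have hβ₀ : β₁ (β₀ b₀) = 0 := by
      have : β₀ b₀ ∈ LinearMap.ker β₁ := by rw [← hcolB₁]; exact ⟨b₀, rfl⟩
      exact this
    have hk2 : a₂ - α₁ a₁ ∈ LinearMap.ker f₂ := by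
      have : β₁ b₁ = β₁ (f₁ a₁) := by
        rw [show b₁ = f₁ a₁ + β₀ b₀ by rw [ha₁]; abel, map_add, hβ₀, add_zero]
      simp [LinearMap.mem_ker, h2, this, sq3]
    rw [← hrowA₂] at hk2
    obtain ⟨k₂, hk₂⟩ := hk2
    refine ⟨k₂, he₃ ?_⟩
    have hα₁ : α₂ (α₁ a₁) = 0 := by
      have : α₁ a₁ ∈ LinearMap.ker α₂ := by rw [← hcolA₂]; exact ⟨a₁, rfl⟩
      exact this
    rw [sq5, hk₂, h3, map_sub, hα₁, sub_zero]
  · rintro ⟨k₂, rfl⟩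
    have hk : a₂ - e₂ k₂ ∈ LinearMap.ker α₂ := by
      simp [LinearMap.mem_ker, ← h3, sq5]
    rw [← hcolA₂] at hk
    obtain ⟨a₁, ha₁⟩ := hk
    have hf₂e₂ : f₂ (e₂ k₂) = 0 := by
      have : e₂ k₂ ∈ LinearMap.ker f₂ := by rw [← hrowA₂]; exact ⟨k₂, rfl⟩
      exact this
    have hk2 : b₁ - f₁ a₁ ∈ LinearMap.ker β₁ := by
      have : β₁ b₁ = β₁ (f₁ a₁) := by
        rw [← h2, ← sq3, ha₁, map_sub, hf₂e₂, sub_zero]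
      simp [LinearMap.mem_ker, this]
    rw [← hcolB₁] at hk2
    obtain ⟨b₀, hb₀⟩ := hk2
    refine ⟨b₀, hγ₀ ?_⟩
    have hg₁f₁ : g₁ (f₁ a₁) = 0 := by
      have : f₁ a₁ ∈ LinearMap.ker g₁ := by rw [← hrowB₁]; exact ⟨a₁, rfl⟩
      exact this
    rw [← sq1, hb₀, ← h1, map_sub, hg₁f₁, sub_zero]
end
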